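/- arXiv:2312.09061 — 2 statements merged into one kernel-verified Lean document; each statement's English description precedes it below -/
import Mathlib

section
/- Lemma 3 (Experimental spurious effect bound): Let δz ≥ 0. Assume fairness through unawareness, pC1 z w = pC0 z w =: q z w for all z, w, with q z w ≥ 0; assume the mediators are exactly adapted, pW1 z w = pW0 z w =: pW z w for all z, w, with pW z w ≥ 0; and assume the L1 residual of the confounder adaptation satisfies Σ_z |pZ1 z − pZ0 z| ≤ δz. Define PCgivenZ z := Σ_w q z w · pW z w (the conditional cluster probability P(c_k | z)). Then the experimental spurious effect ExpSE = (obs_1 − do_1) − (obs_0 − do_0) equals Σ_z PCgivenZ z · (pZ1 z − pZ0 z) and satisfies |ExpSE| ≤ (max_{z ∈ Z} PCgivenZ z) · δz. -/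
open Finset

/-- Lemma 3 (Experimental spurious effect bound): under fairness through unawareness
(`pC1 = pC0 =: q`, with `q ≥ 0`), exact mediator adaptation (`pW1 = pW0 =: pW`, with `pW ≥ 0`),
and an L1-bounded confounder adaptation residual `Σ_z |pZ1 z − pZ0 z| ≤ δz`, the experimental
spurious effect equals `Σ_z P(c_k | z) · (pZ1 z − pZ0 z)` and satisfies
`|ExpSE| ≤ (max_z P(c_k | z)) · δz`, where `P(c_k | z) = Σ_w q z w · pW z w`. -/
theorem exp_se_bound {Z W : Type*} [Fintype Z] [Fintype W] [Nonempty Z] [Nonempty W]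
    (pZ pZ0 pZ1 : Z → ℝ) (pW0 pW1 : Z → W → ℝ) (pC0 pC1 : Z → W → ℝ)
    (q : Z → W → ℝ) (pW : Z → W → ℝ)
    (δz : ℝ) (hδz : 0 ≤ δz)
    (hC1 : ∀ z w, pC1 z w = q z w) (hC0 : ∀ z w, pC0 z w = q z w)
    (hqpos : ∀ z w, 0 ≤ q z w)
    (hW1 : ∀ z w, pW1 z w = pW z w) (hW0 : ∀ z w, pW0 z w = pW z w)
    (hWpos : ∀ z w, 0 ≤ pW z w)
    (hL1 : (∑ z, |pZ1 z - pZ0 z|) ≤ δz) :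
    (((∑ z, ∑ w, pC1 z w * pW1 z w * pZ1 z) - (∑ z, ∑ w, pC1 z w * pW1 z w * pZ z))
       - ((∑ z, ∑ w, pC0 z w * pW0 z w * pZ0 z) - (∑ z, ∑ w, pC0 z w * pW0 z w * pZ z))
      = ∑ z, (∑ w, q z w * pW z w) * (pZ1 z - pZ0 z))
    ∧ |((∑ z, ∑ w, pC1 z w * pW1 z w * pZ1 z) - (∑ z, ∑ w, pC1 z w * pW1 z w * pZ z))
       - ((∑ z, ∑ w, pC0 z w * pW0 z w * pZ0 z) - (∑ z, ∑ w, pC0 z w * pW0 z w * pZ z))|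
      ≤ (univ.sup' univ_nonempty (fun z => ∑ w, q z w * pW z w)) * δz := by
  have heq : (((∑ z, ∑ w, pC1 z w * pW1 z w * pZ1 z) - (∑ z, ∑ w, pC1 z w * pW1 z w * pZ z))
       - ((∑ z, ∑ w, pC0 z w * pW0 z w * pZ0 z) - (∑ z, ∑ w, pC0 z w * pW0 z w * pZ z))
      = ∑ z, (∑ w, q z w * pW z w) * (pZ1 z - pZ0 z)) := by
    simp only [hC1, hC0, hW1, hW0, Finset.sum_mul, ← Finset.sum_sub_distrib]
    exact Finset.sum_congr rfl fun z _ => Finset.sum_congr rfl fun w _ => by ring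
  refine ⟨heq, ?_⟩
  rw [heq]
  set M := univ.sup' univ_nonempty (fun z => ∑ w, q z w * pW z w) with hM
  have hMz : ∀ z : Z, (∑ w, q z w * pW z w) ≤ M := fun z =>
    Finset.le_sup' (fun z => ∑ w, q z w * pW z w) (Finset.mem_univ z)
  have hMpos : 0 ≤ M := le_trans (Finset.sum_nonneg fun w _ =>
    mul_nonneg (hqpos _ w) (hWpos _ w)) (hMz (Classical.arbitrary Z))
  calc |∑ z, (∑ w, q z w * pW z w) * (pZ1 z - pZ0 z)|
      ≤ ∑ z, |(∑ w, q z w * pW z w) * (pZ1 z - pZ0 z)| := Finset.abs_sum_le_sum_abs _ _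
    _ ≤ ∑ z, M * |pZ1 z - pZ0 z| := by
        refine Finset.sum_le_sum fun z _ => ?_
        rw [abs_mul, abs_of_nonneg (Finset.sum_nonneg fun w _ =>
          mul_nonneg (hqpos z w) (hWpos z w))]
        exact mul_le_mul_of_nonneg_right (hMz z) (abs_nonneg _)
    _ = M * ∑ z, |pZ1 z - pZ0 z| := by rw [Finset.mul_sum]
    _ ≤ M * δz := mul_le_mul_of_nonneg_left hL1 hMpos
end

section
/- Theorem 1 (Soundness of the causally fair clustering algorithm): Let δz ≥ 0. Assume fairness through unawareness, pC1 z w = pC0 z w =: q z w for all z, w, with q z w ≥ 0; assume the mediators are exactly adapted, pW1 z w = pW0 z w =: pW z w for all z, w, with pW z w ≥ 0; and assume the confounder adaptation satisfies Σ_z |pZ1 z − pZ0 z| ≤ δz. Then simultaneously: (i) the natural direct effect vanishes, NDE_{x0,x1} = cross_{1,0} − do_0 = 0; (ii) the natural indirect effect vanishes, NIE_{x0,x1} = cross_{0,1} − do_0 = 0; and (iii) the experimental spurious effect is bounded, |ExpSE| ≤ (max_{z ∈ Z} Σ_w q z w · pW z w) · δz; consequently, by the TV decomposition, |TV| = |obs_1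 − obs_0| ≤ (max_{z ∈ Z} Σ_w q z w · pW z w) · δz. -/
open Finset

/-- Theorem 1 (Soundness of the causally fair clustering algorithm): under fairness through
unawareness (`pC1 = pC0 =: q`, `q ≥ 0`), exact mediator adaptation (`pW1 = pW0 =: pW`, `pW ≥ 0`),
and confounder adaptation with L1 residual `Σ_z |pZ1 z − pZ0 z| ≤ δz`, simultaneously:
(i) `NDE_{x0,x1} = cross_{1,0} − do_0 = 0`; (ii) `NIE_{x0,x1} = cross_{0,1} − do_0 = 0`;
(iii) `|ExpSE| ≤ (max_z Σ_w q z w · pW z w) · δz`; and consequently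
`|TV| = |obs_1 − obs_0| ≤ (max_z Σ_w q z w · pW z w) · δz`. -/
theorem soundness_causally_fair_clustering
    {Z W : Type*} [Fintype Z] [Fintype W] [Nonempty Z] [Nonempty W]
    (pZ pZ0 pZ1 : Z → ℝ) (pW0 pW1 : Z → W → ℝ) (pC0 pC1 : Z → W → ℝ)
    (q : Z → W → ℝ) (pW : Z → W → ℝ)
    (δz : ℝ) (hδz : 0 ≤ δz)
    (hC1 : ∀ z w, pC1 z w = q z w) (hC0 : ∀ z w, pC0 z w = q z w)
    (hqpos : ∀ z w, 0 ≤ q z w)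
    (hW1 : ∀ z w, pW1 z w = pW z w) (hW0 : ∀ z w, pW0 z w = pW z w)
    (hWpos : ∀ z w, 0 ≤ pW z w)
    (hL1 : (∑ z, |pZ1 z - pZ0 z|) ≤ δz) :
    ((∑ z, ∑ w, pC1 z w * pW0 z w * pZ z) - (∑ z, ∑ w, pC0 z w * pW0 z w * pZ z) = 0)
    ∧ ((∑ z, ∑ w, pC0 z w * pW1 z w * pZ z) - (∑ z, ∑ w, pC0 z w * pW0 z w * pZ z) = 0)
    ∧ |((∑ z, ∑ w, pC1 z w * pW1 z w * pZ1 z) - (∑ z, ∑ w, pC1 z w * pW1 z w * pZ z))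
        - ((∑ z, ∑ w, pC0 z w * pW0 z w * pZ0 z) - (∑ z, ∑ w, pC0 z w * pW0 z w * pZ z))|
      ≤ (univ.sup' univ_nonempty (fun z => ∑ w, q z w * pW z w)) * δz
    ∧ |(∑ z, ∑ w, pC1 z w * pW1 z w * pZ1 z) - (∑ z, ∑ w, pC0 z w * pW0 z w * pZ0 z)|
      ≤ (univ.sup' univ_nonempty (fun z => ∑ w, q z w * pW z w)) * δz := by
  simp only [hC1, hC0, hW1, hW0]
  set S : Z → ℝ := fun z => ∑ w, q z w * pW z w with hS
  set M : ℝ := univ.sup' univ_nonempty S with hM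
  have hSrw : ∀ (f : Z → ℝ), (∑ z, ∑ w, q z w * pW z w * f z) = ∑ z, S z * f z := by
    intro f
    refine Finset.sum_congr rfl fun z _ => ?_
    rw [hS, Finset.sum_mul]
  have hSnonneg : ∀ z, 0 ≤ S z := fun z =>
    Finset.sum_nonneg fun w _ => mul_nonneg (hqpos z w) (hWpos z w)
  have hSleM : ∀ z, S z ≤ M := fun z => Finset.le_sup' S (mem_univ z)
  have hMnonneg : 0 ≤ M := le_trans (hSnonneg Classical.ofNonempty) (hSleM _)
  have key : |∑ z, S z * (pZ1 z - pZ0 z)| ≤ M * δz := by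
    calc |∑ z, S z * (pZ1 z - pZ0 z)| ≤ ∑ z, |S z * (pZ1 z - pZ0 z)| :=
          Finset.abs_sum_le_sum_abs _ _
      _ ≤ ∑ z, M * |pZ1 z - pZ0 z| := by
          refine Finset.sum_le_sum fun z _ => ?_
          rw [abs_mul, abs_of_nonneg (hSnonneg z)]
          exact mul_le_mul_of_nonneg_right (hSleM z) (abs_nonneg _)
      _ = M * ∑ z, |pZ1 z - pZ0 z| := by rw [Finset.mul_sum]
      _ ≤ M * δz := mul_le_mul_of_nonneg_left hL1 hMnonneg
  have hdiff : (∑ z, ∑ w, q z w * pW z w * pZ1 z) - (∑ z, ∑ w, q z w * pW z w * pZ0 z)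
      = ∑ z, S z * (pZ1 z - pZ0 z) := by
    rw [hSrw, hSrw, ← Finset.sum_sub_distrib]
    exact Finset.sum_congr rfl fun z _ => by ring
  refine ⟨by ring, by ring, ?_, ?_⟩
  · have : ((∑ z, ∑ w, q z w * pW z w * pZ1 z) - (∑ z, ∑ w, q z w * pW z w * pZ z))
        - ((∑ z, ∑ w, q z w * pW z w * pZ0 z) - (∑ z, ∑ w, q z w * pW z w * pZ z))
        = ∑ z, S z * (pZ1 z - pZ0 z) := by rw [← hdiff]; ring
    rw [this]; exact key
  · rw [hdiff]; exact key
end
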